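/- Let p be a distribution on {1,...,n} with p_min ≤ p(i) ≤ p_max for all i, let ε = 1/2, and let g be the distribution obtained from p by the two-phase transformation (first expanding each point into c = 1+⌈log_{3/2}(p_max/p_min)⌉ points with geometric weights, then expanding point i into a_{i mod r} equal-weight points where a_1=1, a_j=⌈(3/2)a_{j−1}⌉, r = ⌈m/k⌉, m = cn). Then the support size N of g satisfies N ≤ 4k·e^{(8n/k)(1+log(p_max/p_min))}. -/
import Mathlib


open Finset

/-- The sequence `a_1 = 1`, `a_{j+1} = ⌈(3/2)·a_j⌉` (the second-phase block lengths for
`ε = 1/2`; the value at `0` is junk). -/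
noncomputable def aseq : ℕ → ℕ
  | 0 => 1
  | 1 => 1
  | (i+2) => ⌈(3/2 : ℝ) * (aseq (i+1) : ℝ)⌉₊

lemma aseq_le_pow (j : ℕ) : aseq (j + 1) ≤ 2 ^ j := by
  induction j with
  | zero => simp [aseq]
  | succ i ih =>
    have hdef : aseq (i + 2) = ⌈(3/2 : ℝ) * (aseq (i+1) : ℝ)⌉₊ := rfl
    have h2 : (3/2 : ℝ) * (aseq (i+1) : ℝ) ≤ ((2 * aseq (i+1) : ℕ) : ℝ) := by
      push_cast
      nlinarith [Nat.cast_nonneg (α := ℝ) (aseq (i+1))]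
    have : aseq (i + 2) ≤ 2 * aseq (i + 1) := hdef ▸ Nat.ceil_le.mpr h2
    calc aseq (i + 2) ≤ 2 * aseq (i + 1) := this
      _ ≤ 2 * 2 ^ i := Nat.mul_le_mul_left 2 ih
      _ = 2 ^ (i + 1) := (pow_succ' 2 i).symm

set_option maxHeartbeats 1000000 in
theorem stmt19 (n k : ℕ) (hn : 0 < n) (hk : 1 ≤ k)
    (pmin pmax : ℝ) (hmin : 0 < pmin) (hmm : pmin ≤ pmax)
    (p : ℕ → ℝ) (hp0 : ∀ i, 0 ≤ p i) (hp1 : ∑ i ∈ Finset.Icc 1 n, p i = 1)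
    (hbounds : ∀ i ∈ Finset.Icc 1 n, pmin ≤ p i ∧ p i ≤ pmax) :
    let c : ℕ := 1 + ⌈Real.log (pmax / pmin) / Real.log (3/2)⌉₊
    let m : ℕ := c * n
    let r : ℕ := ⌈(m : ℝ) / (k : ℝ)⌉₊
    -- `N` is the support size of `g`: element `i` of the first-phase distribution is
    -- expanded into `a_{i mod r}` points, with `i mod r` taken in `{1,…,r}`.
    let N : ℕ := ∑ i ∈ Finset.Icc 1 m, aseq ((i - 1) % r + 1)
    (N : ℝ) ≤ 4 * k * Real.exp ((8 * n / k) * (1 + Real.log (pmax / pmin))) := by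
  intro c m r N
  set L : ℝ := Real.log (pmax / pmin) with hLdef
  have hratio : (1 : ℝ) ≤ pmax / pmin := (one_le_div hmin).mpr hmm
  have hL : 0 ≤ L := Real.log_nonneg hratio
  have hlog2 : Real.log 2 ≤ 1 := by
    have := Real.log_le_sub_one_of_pos (by norm_num : (0:ℝ) < 2)
    linarith
  have hlog2pos : 0 < Real.log 2 := Real.log_pos (by norm_num)
  have hlog32 : (1/3 : ℝ) ≤ Real.log (3/2) := by
    have h := Real.log_le_sub_one_of_pos (by norm_num : (0:ℝ) < 2/3)
    have : Real.log (3/2 : ℝ) = - Real.log (2/3) := by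
      rw [← Real.log_inv]; norm_num
    rw [this]; linarith
  have hlog32pos : (0:ℝ) < Real.log (3/2) := lt_of_lt_of_le (by norm_num) hlog32
  -- bound on c
  have hc : (c : ℝ) ≤ 2 + 3 * L := by
    have hceil : (⌈L / Real.log (3/2)⌉₊ : ℝ) < L / Real.log (3/2) + 1 :=
      Nat.ceil_lt_add_one (div_nonneg hL hlog32pos.le)
    have hdiv : L / Real.log (3/2) ≤ 3 * L := by
      rw [div_le_iff₀ hlog32pos]
      nlinarith
    have : (c : ℝ) = 1 + (⌈L / Real.log (3/2)⌉₊ : ℝ) := by push_cast [show c = 1 + ⌈L / Real.log (3/2)⌉₊ from rfl]; ring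
    linarith
  have hcpos : 0 < c := Nat.lt_of_lt_of_le Nat.one_pos (Nat.le_add_right 1 _)
  have hmpos : 0 < m := Nat.mul_pos hcpos hn
  have hkpos : (0:ℝ) < (k:ℝ) := by exact_mod_cast hk
  have hmkpos : (0:ℝ) < (m:ℝ) / (k:ℝ) := div_pos (by exact_mod_cast hmpos) hkpos
  have hrpos : 0 < r := Nat.ceil_pos.mpr hmkpos
  -- Nat bound : N ≤ m * 2^(r-1)
  have hN : N ≤ m * 2 ^ (r - 1) := by
    calc N ≤ ∑ i ∈ Finset.Icc 1 m, 2 ^ ((i - 1) % r) :=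
          Finset.sum_le_sum fun i _ => aseq_le_pow _
      _ ≤ ∑ _i ∈ Finset.Icc 1 m, 2 ^ (r - 1) := by
          refine Finset.sum_le_sum fun i _ => Nat.pow_le_pow_right (by norm_num) ?_
          have := Nat.mod_lt (i - 1) hrpos
          omega
      _ = m * 2 ^ (r - 1) := by
          rw [Finset.sum_const, Nat.card_Icc]
          simp [smul_eq_mul]
  -- real bounds
  have hr1 : ((r - 1 : ℕ) : ℝ) ≤ (m:ℝ) / (k:ℝ) := by
    have hceil : (r : ℝ) < (m:ℝ)/(k:ℝ) + 1 := Nat.ceil_lt_add_one hmkpos.le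
    have : ((r - 1 : ℕ) : ℝ) = (r:ℝ) - 1 := by
      rw [Nat.cast_sub hrpos]; simp
    rw [this]; linarith
  have hpow : ((2:ℝ) ^ (r - 1 : ℕ)) ≤ Real.exp ((m:ℝ)/(k:ℝ) * Real.log 2) := by
    have heq : ((2:ℝ) ^ (r - 1 : ℕ)) = Real.exp (((r-1:ℕ):ℝ) * Real.log 2) := by
      rw [← Real.log_pow, Real.exp_log (by positivity)]
    rw [heq]
    exact Real.exp_le_exp.mpr (mul_le_mul_of_nonneg_right hr1 hlog2pos.le)
  have hm_le : (m : ℝ) ≤ (k:ℝ) * Real.exp ((m:ℝ)/(k:ℝ)) := by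
    have := Real.add_one_le_exp ((m:ℝ)/(k:ℝ))
    have h1 : (m:ℝ)/(k:ℝ) ≤ Real.exp ((m:ℝ)/(k:ℝ)) := by linarith
    calc (m:ℝ) = (k:ℝ) * ((m:ℝ)/(k:ℝ)) := by field_simp
      _ ≤ (k:ℝ) * Real.exp ((m:ℝ)/(k:ℝ)) := mul_le_mul_of_nonneg_left h1 hkpos.le
  have hNR : (N : ℝ) ≤ (m:ℝ) * (2:ℝ) ^ (r - 1 : ℕ) := by
    have := hN
    push_cast
    exact_mod_cast Nat.cast_le.mpr hN
  have key : (N : ℝ) ≤ (k:ℝ) * Real.exp ((m:ℝ)/(k:ℝ) * (1 + Real.log 2)) := by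
    calc (N:ℝ) ≤ (m:ℝ) * (2:ℝ) ^ (r - 1 : ℕ) := hNR
      _ ≤ ((k:ℝ) * Real.exp ((m:ℝ)/(k:ℝ))) * Real.exp ((m:ℝ)/(k:ℝ) * Real.log 2) := by
          apply mul_le_mul hm_le hpow (by positivity) (by positivity)
      _ = (k:ℝ) * Real.exp ((m:ℝ)/(k:ℝ) * (1 + Real.log 2)) := by
          rw [mul_assoc, ← Real.exp_add]; ring_nf
  -- exponent comparison
  have hm_cast : (m : ℝ) = (c:ℝ) * (n:ℝ) := by exact_mod_cast rfl
  have hexp : (m:ℝ)/(k:ℝ) * (1 + Real.log 2) ≤ (8 * n / (k:ℝ)) * (1 + L) := by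
    rw [div_mul_eq_mul_div, div_mul_eq_mul_div, div_le_div_iff₀ hkpos hkpos]
    have hn1 : (1:ℝ) ≤ (n:ℝ) := by exact_mod_cast hn
    have : (m:ℝ) * (1 + Real.log 2) ≤ 8 * (n:ℝ) * (1 + L) := by
      rw [hm_cast]
      nlinarith [hlog2pos.le]
    nlinarith [hkpos]
  calc (N:ℝ) ≤ (k:ℝ) * Real.exp ((m:ℝ)/(k:ℝ) * (1 + Real.log 2)) := key
    _ ≤ (k:ℝ) * Real.exp ((8 * n / (k:ℝ)) * (1 + L)) := by
        exact mul_le_mul_of_nonneg_left (Real.exp_le_exp.mpr hexp) hkpos.le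
    _ ≤ 4 * k * Real.exp ((8 * n / (k:ℝ)) * (1 + L)) := by
        have := Real.exp_pos ((8 * n / (k:ℝ)) * (1 + L))
        nlinarith
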